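/- arXiv:1306.4442 — 6 statements merged into one kernel-verified Lean document; each statement's English description precedes it below -/
import Mathlib

section
/- Let θ < 0, β ∈ (0,1), x ∈ ℕ, and let (q_k)_{k∈ℤ} be nonnegative reals with Σ_{k∈ℤ} q_k = 1. Then for every a ∈ {0,1,...,x}: e^{θa} · ( Σ_{k ≥ a−x} e^{θβ(x−a+k)} q_k + Σ_{k ≤ a−x−1} q_k ) ≥ e^{θx} · Σ_{k∈ℤ} e^{θβ·max(k,0)} q_k. -/
/-!
The inequality holds summand by summand. If the surplus stays nonnegative (`k ≥ a - x`), the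
claim is `θ x + θβ k⁺ ≤ θ a + θβ (x - a + k)`, which holds for every `k` since
`β (x - a) ≤ x - a`, `β k ≤ β k⁺` and `θ ≤ 0`. Otherwise `k < a - x ≤ 0`, so `k⁺ = 0` and the
claim reduces to `θ x ≤ θ a`. Summability comes from `0 ≤ e^{θ t} ≤ 1` for `t ≥ 0`.
-/

open Real

lemma exp_mul_le_of_nonpos {t r : ℝ} (ht : t ≤ 0) (hr : 0 ≤ r) : exp t * r ≤ r :=
  mul_le_of_le_one_left hr (exp_le_one_iff.2 ht)

lemma mul_add_mul_max_le {θ β a x k : ℝ} (hθ : θ ≤ 0) (hβ0 : 0 ≤ β) (hβ1 : β ≤ 1)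
    (hax : a ≤ x) :
    θ * x + θ * β * max k 0 ≤ θ * a + θ * β * (x - a + k) := by
  have hgap : 0 ≤ (1 - β) * (x - a) + β * (max k 0 - k) :=
    add_nonneg (mul_nonneg (by linarith) (by linarith))
      (mul_nonneg hβ0 (by linarith [le_max_left k 0]))
  nlinarith [mul_nonpos_of_nonpos_of_nonneg hθ hgap]

lemma exp_mul_max_mul_le_ite {θ β : ℝ} (hθ : θ ≤ 0) (hβ0 : 0 ≤ β) (hβ1 : β ≤ 1)
    {x a : ℕ} (ha : a ≤ x) (k : ℤ) {r : ℝ} (hr : 0 ≤ r) :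
    exp (θ * x) * (exp (θ * β * max (k : ℝ) 0) * r) ≤
      exp (θ * a) * ((if (a : ℤ) - x ≤ k then exp (θ * β * ((x : ℝ) - a + k)) * r else 0)
        + if k ≤ (a : ℤ) - x - 1 then r else 0) := by
  have hax : (a : ℝ) ≤ x := by exact_mod_cast ha
  by_cases hk : (a : ℤ) - x ≤ k
  · rw [if_pos hk, if_neg (by omega), add_zero, ← mul_assoc, ← mul_assoc, ← exp_add, ← exp_add]
    exact mul_le_mul_of_nonneg_right
      (exp_le_exp.2 (mul_add_mul_max_le hθ hβ0 hβ1 hax)) hr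
  · have hk0 : (k : ℝ) ≤ 0 := by exact_mod_cast (show k ≤ 0 by omega)
    rw [if_neg hk, if_pos (by omega), zero_add, max_eq_right hk0, mul_zero, exp_zero, one_mul]
    exact mul_le_mul_of_nonneg_right (exp_le_exp.2 (mul_le_mul_of_nonpos_left hax hθ)) hr

theorem stmt0 (θ β : ℝ) (hθ : θ < 0) (hβ0 : 0 < β) (hβ1 : β < 1)
    (x : ℕ) (q : ℤ → ℝ) (hq : ∀ k, 0 ≤ q k) (hsum : HasSum q 1)
    (a : ℕ) (ha : a ≤ x) :
    Real.exp (θ * x) * ∑' k : ℤ, Real.exp (θ * β * max (k : ℝ) 0) * q k ≤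
      Real.exp (θ * a) *
        ((∑' k : ℤ, if (a : ℤ) - x ≤ k then Real.exp (θ * β * ((x : ℝ) - a + k)) * q k else 0)
          + ∑' k : ℤ, if k ≤ (a : ℤ) - x - 1 then q k else 0) := by
  have hθβ : θ * β ≤ 0 := mul_nonpos_of_nonpos_of_nonneg hθ.le hβ0.le
  have hpay : Summable fun k : ℤ ↦ exp (θ * β * max (k : ℝ) 0) * q k :=
    hsum.summable.of_nonneg_of_le (fun k ↦ mul_nonneg (exp_pos _).le (hq k))
      (fun k ↦ exp_mul_le_of_nonpos
        (mul_nonpos_of_nonpos_of_nonneg hθβ (le_max_right _ _)) (hq k))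
  have hstay : Summable fun k : ℤ ↦
      if (a : ℤ) - x ≤ k then exp (θ * β * ((x : ℝ) - a + k)) * q k else 0 := by
    refine hsum.summable.of_nonneg_of_le
      (fun k ↦ by split_ifs <;> simp [hq, mul_nonneg, exp_nonneg]) (fun k ↦ ?_)
    split_ifs with hk
    · have hk' : (a : ℝ) - x ≤ k := by exact_mod_cast hk
      exact exp_mul_le_of_nonpos (mul_nonpos_of_nonpos_of_nonneg hθβ (by linarith)) (hq k)
    · exact hq k
  have hruin : Summable fun k : ℤ ↦ if k ≤ (a : ℤ) - x - 1 then q k else 0 :=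
    hsum.summable.of_nonneg_of_le (fun k ↦ by split_ifs <;> simp [hq])
      (fun k ↦ by split_ifs <;> simp [hq])
  rw [← hstay.tsum_add hruin, ← tsum_mul_left, ← tsum_mul_left]
  exact (hpay.mul_left _).tsum_le_tsum
    (fun k ↦ exp_mul_max_mul_le_ite hθ.le hβ0.le hβ1.le ha k (hq k))
    ((hstay.add hruin).mul_left _)
end

section
/- Fix θ < 0 and let G : ℕ → (0,∞). Define J(x) = min over a ∈ {0,...,x} of e^{θa} G(x−a), and let f(x) be the largest a ∈ {0,...,x} attaining this minimum. Then for every x ∈ ℕ: J(x) = e^{θ f(x)} J(x − f(x)) and f(x − f(x)) = 0. -/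
/-!
Write `J x = min_{a ≤ x} e^{θa} G(x - a)`. Composing a payment `b` with an optimal payment
from `x - b` gives `J x ≤ e^{θb} J(x - b)`. At `b = f x` the reverse inequality holds because
`J(x - f x) ≤ G(x - f x)`, so `J x = e^{θ f x} J(x - f x)`. Consequently paying `f x` and then
`f(x - f x)` is again optimal from `x`, and maximality of `f x` forces `f(x - f x) = 0`.
-/

open Finset

noncomputable def discountedMin (θ : ℝ) (G : ℕ → ℝ) (x : ℕ) : ℝ :=
  (range (x + 1)).inf' (nonempty_range_iff.mpr (Nat.succ_ne_zero x))
    (fun a => Real.exp (θ * a) * G (x - a))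

namespace discountedMin

variable {θ : ℝ} {G : ℕ → ℝ} {x : ℕ}

theorem le_exp_mul_apply_sub {a : ℕ} (ha : a ≤ x) :
    discountedMin θ G x ≤ Real.exp (θ * a) * G (x - a) :=
  inf'_le _ (mem_range.mpr (Nat.lt_succ_of_le ha))

theorem le_apply : discountedMin θ G x ≤ G x := by
  simpa using le_exp_mul_apply_sub (θ := θ) (G := G) (Nat.zero_le x)

theorem exists_eq (θ : ℝ) (G : ℕ → ℝ) (x : ℕ) :
    ∃ a ≤ x, Real.exp (θ * a) * G (x - a) = discountedMin θ G x := by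
  obtain ⟨a, ha, h⟩ := exists_mem_eq_inf' (nonempty_range_iff.mpr (Nat.succ_ne_zero x))
    (fun a => Real.exp (θ * a) * G (x - a))
  exact ⟨a, Nat.lt_succ_iff.mp (mem_range.mp ha), h.symm⟩

theorem le_exp_mul_sub {b : ℕ} (hb : b ≤ x) :
    discountedMin θ G x ≤ Real.exp (θ * b) * discountedMin θ G (x - b) := by
  obtain ⟨a, ha, hmin⟩ := exists_eq θ G (x - b)
  calc discountedMin θ G x ≤ Real.exp (θ * ↑(b + a)) * G (x - (b + a)) :=
        le_exp_mul_apply_sub (by omega)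
    _ = Real.exp (θ * b) * discountedMin θ G (x - b) := by
        rw [← hmin, Nat.sub_add_eq, Nat.cast_add, mul_add, Real.exp_add, mul_assoc]

end discountedMin

theorem stmt5_general (θ : ℝ) (G : ℕ → ℝ)
    (J : ℕ → ℝ)
    (hJ : ∀ x : ℕ, J x = (Finset.range (x + 1)).inf'
      (Finset.nonempty_range_iff.mpr (Nat.succ_ne_zero x))
      (fun a => Real.exp (θ * a) * G (x - a)))
    (f : ℕ → ℕ)
    (hf1 : ∀ x, f x ≤ x)
    (hf2 : ∀ x, J x = Real.exp (θ * f x) * G (x - f x))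
    (hf3 : ∀ x : ℕ, ∀ a : ℕ, a ≤ x → Real.exp (θ * a) * G (x - a) = J x → a ≤ f x) :
    ∀ x : ℕ, J x = Real.exp (θ * f x) * J (x - f x) ∧ f (x - f x) = 0 := by
  obtain rfl : J = discountedMin θ G := funext hJ
  intro x
  have hJx : discountedMin θ G x = Real.exp (θ * f x) * discountedMin θ G (x - f x) := by
    refine le_antisymm (discountedMin.le_exp_mul_sub (hf1 x)) ?_
    rw [hf2 x]
    gcongr
    exact discountedMin.le_apply
  refine ⟨hJx, ?_⟩
  have hf_add_optimal : Real.exp (θ * ↑(f x + f (x - f x))) * G (x - (f x + f (x - f x)))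
      = discountedMin θ G x := by
    rw [hJx, hf2 (x - f x), Nat.sub_add_eq, Nat.cast_add, mul_add, Real.exp_add, mul_assoc]
  have := hf3 x _ (by have := hf1 x; have := hf1 (x - f x); omega) hf_add_optimal
  omega

theorem stmt5 (θ : ℝ) (hθ : θ < 0) (G : ℕ → ℝ) (hG : ∀ n, 0 < G n)
    (J : ℕ → ℝ)
    (hJ : ∀ x : ℕ, J x = (Finset.range (x + 1)).inf'
      (Finset.nonempty_range_iff.mpr (Nat.succ_ne_zero x))
      (fun a => Real.exp (θ * a) * G (x - a)))
    (f : ℕ → ℕ)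
    (hf1 : ∀ x, f x ≤ x)
    (hf2 : ∀ x, J x = Real.exp (θ * f x) * G (x - f x))
    (hf3 : ∀ x : ℕ, ∀ a : ℕ, a ≤ x → Real.exp (θ * a) * G (x - a) = J x → a ≤ f x) :
    ∀ x : ℕ, J x = Real.exp (θ * f x) * J (x - f x) ∧ f (x - f x) = 0 :=
  stmt5_general θ G J hJ f hf1 hf2 hf3
end

section
/- Fix θ < 0 and let G : ℕ → (0,∞). Define J(x) = min over a ∈ {0,...,x} of e^{θa} G(x−a), and let f(x) be the largest minimiser. If x₀ ∈ ℕ satisfies f(x₀) = a₀ and f(x₀+1) > 0, then f(x₀+1) = a₀ + 1. -/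
/-! The cost of action `a + 1` at state `x + 1` is `e^θ` times the cost of action `a` at state `x`.
Hence `J (x₀ + 1) = e^θ J x₀`, and the positive minimisers at `x₀ + 1` are exactly the shifts
`a + 1` of the minimisers `a` at `x₀`; in particular so is the largest one. -/

section ShiftedCost

variable {c : ℕ → ℕ → ℝ} {k : ℝ} {J : ℕ → ℝ} {f : ℕ → ℕ}
  (hshift : ∀ x a, c (x + 1) (a + 1) = k * c x a)
  (hJle : ∀ x a, a ≤ x → J x ≤ c x a)
  (hf_le : ∀ x, f x ≤ x)
  (hf_min : ∀ x, J x = c x (f x))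
include hshift hJle hf_le hf_min

theorem value_succ_eq_of_pos_minimiser (hk : 0 < k) {x : ℕ} (hpos : 0 < f (x + 1)) :
    J (x + 1) = k * J x := by
  have hshifted : J (x + 1) = k * c x (f (x + 1) - 1) := by
    rw [← hshift, Nat.sub_add_cancel hpos, hf_min]
  refine le_antisymm ?_ ?_
  · calc J (x + 1) ≤ c (x + 1) (f x + 1) := hJle _ _ (Nat.succ_le_succ (hf_le x))
      _ = k * J x := by rw [hshift, hf_min]
  · rw [hshifted]
    exact mul_le_mul_of_nonneg_left (hJle _ _ (by have := hf_le (x + 1); omega)) hk.le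

theorem largest_minimiser_succ_of_pos (hk : 0 < k)
    (hf_largest : ∀ x a, a ≤ x → c x a = J x → a ≤ f x) {x : ℕ} (hpos : 0 < f (x + 1)) :
    f (x + 1) = f x + 1 := by
  have hJ_succ := value_succ_eq_of_pos_minimiser hshift hJle hf_le hf_min hk hpos
  have hpred_min : c x (f (x + 1) - 1) = J x := by
    apply mul_left_cancel₀ hk.ne'
    rw [← hshift, Nat.sub_add_cancel hpos, ← hf_min, hJ_succ]
  have hsucc_min : c (x + 1) (f x + 1) = J (x + 1) := by
    rw [hshift, ← hf_min, hJ_succ]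
  have hle := hf_largest x _ (by have := hf_le (x + 1); omega) hpred_min
  have hge := hf_largest (x + 1) _ (Nat.succ_le_succ (hf_le x)) hsucc_min
  omega

end ShiftedCost

theorem exp_mul_succ_mul_sub_succ (θ : ℝ) (G : ℕ → ℝ) (x a : ℕ) :
    Real.exp (θ * ↑(a + 1)) * G (x + 1 - (a + 1)) = Real.exp θ * (Real.exp (θ * a) * G (x - a)) := by
  rw [Nat.add_sub_add_right, Nat.cast_succ, mul_add_one, Real.exp_add]
  ring

theorem stmt6_general (θ : ℝ) (G : ℕ → ℝ)
    (J : ℕ → ℝ)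
    (hJ : ∀ x : ℕ, J x = (Finset.range (x + 1)).inf'
      (Finset.nonempty_range_iff.mpr (Nat.succ_ne_zero x))
      (fun a => Real.exp (θ * a) * G (x - a)))
    (f : ℕ → ℕ)
    (hf1 : ∀ x, f x ≤ x)
    (hf2 : ∀ x, J x = Real.exp (θ * f x) * G (x - f x))
    (hf3 : ∀ x : ℕ, ∀ a : ℕ, a ≤ x → Real.exp (θ * a) * G (x - a) = J x → a ≤ f x)
    (x₀ a₀ : ℕ) (h0 : f x₀ = a₀) (h1 : 0 < f (x₀ + 1)) :
    f (x₀ + 1) = a₀ + 1 := by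
  have hJle : ∀ x a, a ≤ x → J x ≤ Real.exp (θ * a) * G (x - a) := fun x a ha =>
    hJ x ▸ Finset.inf'_le _ (Finset.mem_range.mpr (Nat.lt_succ_of_le ha))
  rw [← h0]
  exact largest_minimiser_succ_of_pos (exp_mul_succ_mul_sub_succ θ G) hJle hf1 hf2
    (Real.exp_pos θ) hf3 h1

theorem stmt6 (θ : ℝ) (hθ : θ < 0) (G : ℕ → ℝ) (hG : ∀ n, 0 < G n)
    (J : ℕ → ℝ)
    (hJ : ∀ x : ℕ, J x = (Finset.range (x + 1)).inf'
      (Finset.nonempty_range_iff.mpr (Nat.succ_ne_zero x))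
      (fun a => Real.exp (θ * a) * G (x - a)))
    (f : ℕ → ℕ)
    (hf1 : ∀ x, f x ≤ x)
    (hf2 : ∀ x, J x = Real.exp (θ * f x) * G (x - f x))
    (hf3 : ∀ x : ℕ, ∀ a : ℕ, a ≤ x → Real.exp (θ * a) * G (x - a) = J x → a ≤ f x)
    (x₀ a₀ : ℕ) (h0 : f x₀ = a₀) (h1 : 0 < f (x₀ + 1)) :
    f (x₀ + 1) = a₀ + 1 :=
  stmt6_general θ G J hJ f hf1 hf2 hf3 x₀ a₀ h0 h1
end

section
/- Fix θ < 0 and let G : ℕ → (0,∞). Define J(x) = min over a ∈ {0,...,x} of e^{θa}G(x−a), let f(x) be the largest minimiser, and set ξ := sup{ x ∈ ℕ : f(x) = 0 }. Assume ξ < ∞. Then for every x > ξ, f(x) = x − ξ. -/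
/-!
Write `J` for the value function and `f` for its largest minimiser. Splitting an action `a + b`
at `x` into `a` followed by `b` at `x - a` gives `J x ≤ e^{θa} J (x - a)`, with equality for
`a = f x`. Whenever this equality holds, maximality of `f x` forces `a + f (x - a) ≤ f x`; for
`a = f x` this says `f (x - f x) = 0`, so `x - f x ≤ ξ`. Conversely, if `f x = (x - ξ) + b`,
comparing `J x ≤ e^{θ(x-ξ)} J ξ` with `J x = e^{θ(x-ξ)} e^{θb} J (ξ - b)` shows that `b` is
optimal at `ξ`, hence `b ≤ f ξ = 0`.
-/
open Finset Real

noncomputable def minCost (θ : ℝ) (G : ℕ → ℝ) (x : ℕ) : ℝ :=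
  (range (x + 1)).inf' (nonempty_range_iff.mpr (Nat.succ_ne_zero x))
    fun a => exp (θ * a) * G (x - a)

structure IsLargestMinimizer (θ : ℝ) (G : ℕ → ℝ) (f : ℕ → ℕ) : Prop where
  le_self : ∀ x, f x ≤ x
  minCost_eq : ∀ x, minCost θ G x = exp (θ * f x) * G (x - f x)
  le_of_eq_minCost :
    ∀ x a : ℕ, a ≤ x → exp (θ * a) * G (x - a) = minCost θ G x → a ≤ f x

lemma exp_mul_natCast_add (θ : ℝ) (a b : ℕ) :
    exp (θ * ↑(a + b)) = exp (θ * a) * exp (θ * b) := by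
  rw [Nat.cast_add, mul_add, exp_add]

section

variable {θ : ℝ} {G : ℕ → ℝ}

lemma minCost_le {x a : ℕ} (ha : a ≤ x) : minCost θ G x ≤ exp (θ * a) * G (x - a) :=
  inf'_le _ (mem_range.mpr (Nat.lt_succ_of_le ha))

lemma minCost_le_exp_mul_minCost {x a : ℕ} (ha : a ≤ x) :
    minCost θ G x ≤ exp (θ * a) * minCost θ G (x - a) := by
  obtain ⟨b, hb, hmin⟩ := exists_mem_eq_inf' (nonempty_range_iff.mpr (Nat.succ_ne_zero (x - a)))
    fun b => exp (θ * b) * G (x - a - b)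
  have hbx : b ≤ x - a := Nat.lt_succ_iff.mp (mem_range.mp hb)
  calc minCost θ G x ≤ exp (θ * ↑(a + b)) * G (x - (a + b)) := minCost_le (by omega)
    _ = exp (θ * a) * (exp (θ * b) * G (x - a - b)) := by
      rw [exp_mul_natCast_add, Nat.sub_add_eq, mul_assoc]
    _ = exp (θ * a) * minCost θ G (x - a) := by rw [minCost, hmin]

namespace IsLargestMinimizer

variable {f : ℕ → ℕ}

lemma minCost_eq_exp_mul_minCost (hf : IsLargestMinimizer θ G f) (x : ℕ) :
    minCost θ G x = exp (θ * f x) * minCost θ G (x - f x) := by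
  refine le_antisymm (minCost_le_exp_mul_minCost (hf.le_self x)) ?_
  calc exp (θ * f x) * minCost θ G (x - f x) ≤ exp (θ * f x) * G (x - f x) := by
        gcongr
        simpa using minCost_le (θ := θ) (G := G) (Nat.zero_le (x - f x))
    _ = minCost θ G x := (hf.minCost_eq x).symm

lemma add_le_of_minCost_eq (hf : IsLargestMinimizer θ G f) {x a : ℕ} (ha : a ≤ x)
    (h : minCost θ G x = exp (θ * a) * minCost θ G (x - a)) : a + f (x - a) ≤ f x := by
  have hle := hf.le_self (x - a)
  refine hf.le_of_eq_minCost x _ (by omega) ?_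
  rw [h, hf.minCost_eq (x - a), exp_mul_natCast_add, ← Nat.sub_add_eq, mul_assoc]

lemma apply_sub_self_apply_eq_zero (hf : IsLargestMinimizer θ G f) (x : ℕ) :
    f (x - f x) = 0 := by
  have := hf.add_le_of_minCost_eq (hf.le_self x) (hf.minCost_eq_exp_mul_minCost x)
  omega

lemma eq_sub_of_apply_eq_zero (hf : IsLargestMinimizer θ G f) {ξ x : ℕ} (hξ : f ξ = 0)
    (hξx : ξ ≤ x) (hx : x - ξ ≤ f x) : f x = x - ξ := by
  obtain ⟨b, hb⟩ : ∃ b, f x = (x - ξ) + b := ⟨f x - (x - ξ), by omega⟩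
  have hbξ : b ≤ ξ := by have := hf.le_self x; omega
  have hsub : x - f x = ξ - b := by omega
  have hx_eq :
      exp (θ * ↑(x - ξ)) * (exp (θ * b) * minCost θ G (ξ - b)) = minCost θ G x := by
    rw [hf.minCost_eq_exp_mul_minCost x, hsub, hb, exp_mul_natCast_add, mul_assoc]
  have hx_le : minCost θ G x ≤ exp (θ * ↑(x - ξ)) * minCost θ G ξ := by
    have := minCost_le_exp_mul_minCost (θ := θ) (G := G) (Nat.sub_le x ξ)
    rwa [Nat.sub_sub_self hξx] at this
  have hb_opt : minCost θ G ξ = exp (θ * b) * minCost θ G (ξ - b) :=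
    le_antisymm (minCost_le_exp_mul_minCost hbξ)
      (le_of_mul_le_mul_left (hx_eq.trans_le hx_le) (exp_pos _))
  have := hf.add_le_of_minCost_eq hbξ hb_opt
  omega

end IsLargestMinimizer

end

theorem stmt8_general (θ : ℝ) (G : ℕ → ℝ)
    (J : ℕ → ℝ)
    (hJ : ∀ x : ℕ, J x = (Finset.range (x + 1)).inf'
      (Finset.nonempty_range_iff.mpr (Nat.succ_ne_zero x))
      (fun a => Real.exp (θ * a) * G (x - a)))
    (f : ℕ → ℕ)
    (hf1 : ∀ x, f x ≤ x)
    (hf2 : ∀ x, J x = Real.exp (θ * f x) * G (x - f x))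
    (hf3 : ∀ x : ℕ, ∀ a : ℕ, a ≤ x → Real.exp (θ * a) * G (x - a) = J x → a ≤ f x)
    (ξ : ℕ) (hξ0 : f ξ = 0) (hξub : ∀ x, f x = 0 → x ≤ ξ) :
    ∀ x : ℕ, ξ < x → f x = x - ξ := by
  obtain rfl : J = minCost θ G := funext hJ
  have hf : IsLargestMinimizer θ G f := ⟨hf1, hf2, hf3⟩
  intro x hξx
  refine hf.eq_sub_of_apply_eq_zero hξ0 hξx.le ?_
  have := hξub _ (hf.apply_sub_self_apply_eq_zero x)
  omega

theorem stmt8 (θ : ℝ) (hθ : θ < 0) (G : ℕ → ℝ) (hG : ∀ n, 0 < G n)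
    (J : ℕ → ℝ)
    (hJ : ∀ x : ℕ, J x = (Finset.range (x + 1)).inf'
      (Finset.nonempty_range_iff.mpr (Nat.succ_ne_zero x))
      (fun a => Real.exp (θ * a) * G (x - a)))
    (f : ℕ → ℕ)
    (hf1 : ∀ x, f x ≤ x)
    (hf2 : ∀ x, J x = Real.exp (θ * f x) * G (x - f x))
    (hf3 : ∀ x : ℕ, ∀ a : ℕ, a ≤ x → Real.exp (θ * a) * G (x - a) = J x → a ≤ f x)
    (ξ : ℕ) (hξ0 : f ξ = 0) (hξub : ∀ x, f x = 0 → x ≤ ξ) :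
    ∀ x : ℕ, ξ < x → f x = x - ξ :=
  stmt8_general θ G J hJ f hf1 hf2 hf3 ξ hξ0 hξub
end

section
/- Fix γ ∈ (0,1), β ∈ (0,1), and let G : ℕ × [0,∞) → [0,∞). Define J(x,y) = β^γ · max over a ∈ {0,...,x} of G(x−a, (a+y)/β), and for each (x,y) let f(x,y) be the largest maximiser. Then f( x − f(x,y), y + f(x,y) ) = 0 for all x ∈ ℕ, y ≥ 0. -/
/-!
Paying `F = f x y` moves the state from `(x, y)` to `(x - F, y + F)`, and paying `b` afterwards
gives exactly the payoff of paying `F + b` at once. Hence `J (x - F) (y + F)`, which is at least the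
payoff of paying nothing more, i.e. `J x y`, is also the payoff of `F + b` at `(x, y)`, so it is at
most `J x y`. Thus `F + b` is a maximiser at `(x, y)`, and since `F` is the largest one, `b = 0`.
-/

namespace DividendPayoff

variable (G : ℕ → ℝ → ℝ) (β : ℝ)

noncomputable def payoff (x : ℕ) (y : ℝ) (a : ℕ) : ℝ := G (x - a) ((a + y) / β)

theorem payoff_shift (x F b : ℕ) (y : ℝ) :
    payoff G β (x - F) (y + F) b = payoff G β x y (F + b) := by
  simp only [payoff, Nat.sub_sub, Nat.cast_add]
  ring_nf

theorem payoff_le_sup' {x a : ℕ} (y : ℝ) (ha : a ≤ x) :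
    payoff G β x y a ≤ (Finset.range (x + 1)).sup'
      (Finset.nonempty_range_iff.mpr (Nat.succ_ne_zero x)) (payoff G β x y) :=
  Finset.le_sup' _ (Finset.mem_range.mpr (Nat.lt_succ_of_le ha))

end DividendPayoff

open DividendPayoff in
theorem stmt12_general (γ β : ℝ) (hβ0 : 0 < β)
    (G : ℕ → ℝ → ℝ)
    (J : ℕ → ℝ → ℝ)
    (hJ : ∀ x : ℕ, ∀ y : ℝ, 0 ≤ y → J x y = β ^ γ * (Finset.range (x + 1)).sup'
      (Finset.nonempty_range_iff.mpr (Nat.succ_ne_zero x))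
      (fun a => G (x - a) (((a : ℝ) + y) / β)))
    (f : ℕ → ℝ → ℕ)
    (hf1 : ∀ x : ℕ, ∀ y : ℝ, 0 ≤ y → f x y ≤ x)
    (hf2 : ∀ x : ℕ, ∀ y : ℝ, 0 ≤ y →
      J x y = β ^ γ * G (x - f x y) (((f x y : ℝ) + y) / β))
    (hf3 : ∀ x : ℕ, ∀ y : ℝ, 0 ≤ y → ∀ a : ℕ, a ≤ x →
      β ^ γ * G (x - a) (((a : ℝ) + y) / β) = J x y → a ≤ f x y) :
    ∀ x : ℕ, ∀ y : ℝ, 0 ≤ y → f (x - f x y) (y + f x y) = 0 := by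
  intro x y hy
  set F := f x y
  set b := f (x - F) (y + F)
  have hy' : 0 ≤ y + F := by positivity
  have payoff_le_value : ∀ x y, 0 ≤ y → ∀ a ≤ x, β ^ γ * payoff G β x y a ≤ J x y :=
    fun x y hy a ha => by
      rw [hJ x y hy]
      exact mul_le_mul_of_nonneg_left (payoff_le_sup' G β y ha) (Real.rpow_nonneg hβ0.le γ)
  have value_le_shifted : J x y ≤ J (x - F) (y + F) := by
    calc J x y = β ^ γ * payoff G β x y (F + 0) := hf2 x y hy
      _ = β ^ γ * payoff G β (x - F) (y + F) 0 := by rw [payoff_shift]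
      _ ≤ J (x - F) (y + F) := payoff_le_value _ _ hy' 0 (Nat.zero_le _)
  have hFb : F + b ≤ x := by
    have := hf1 x y hy
    have := hf1 (x - F) (y + F) hy'
    omega
  have hmax : β ^ γ * payoff G β x y (F + b) = J x y := by
    refine le_antisymm (payoff_le_value x y hy _ hFb) ?_
    calc J x y ≤ J (x - F) (y + F) := value_le_shifted
      _ = β ^ γ * payoff G β (x - F) (y + F) b := hf2 _ _ hy'
      _ = β ^ γ * payoff G β x y (F + b) := by rw [payoff_shift]
  have := hf3 x y hy (F + b) hFb hmax
  omega

theorem stmt12 (γ β : ℝ) (hγ0 : 0 < γ) (hγ1 : γ < 1) (hβ0 : 0 < β) (hβ1 : β < 1)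
    (G : ℕ → ℝ → ℝ) (hG : ∀ x : ℕ, ∀ y : ℝ, 0 ≤ y → 0 ≤ G x y)
    (J : ℕ → ℝ → ℝ)
    (hJ : ∀ x : ℕ, ∀ y : ℝ, 0 ≤ y → J x y = β ^ γ * (Finset.range (x + 1)).sup'
      (Finset.nonempty_range_iff.mpr (Nat.succ_ne_zero x))
      (fun a => G (x - a) (((a : ℝ) + y) / β)))
    (f : ℕ → ℝ → ℕ)
    (hf1 : ∀ x : ℕ, ∀ y : ℝ, 0 ≤ y → f x y ≤ x)
    (hf2 : ∀ x : ℕ, ∀ y : ℝ, 0 ≤ y →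
      J x y = β ^ γ * G (x - f x y) (((f x y : ℝ) + y) / β))
    (hf3 : ∀ x : ℕ, ∀ y : ℝ, 0 ≤ y → ∀ a : ℕ, a ≤ x →
      β ^ γ * G (x - a) (((a : ℝ) + y) / β) = J x y → a ≤ f x y) :
    ∀ x : ℕ, ∀ y : ℝ, 0 ≤ y → f (x - f x y) (y + f x y) = 0 :=
  stmt12_general γ β hβ0 G J hJ f hf1 hf2 hf3
end

section
/- Fix γ ∈ (0,1), β ∈ (0,1), and let G : ℕ × [0,∞) → [0,∞). Define J(x,y) = β^γ · max over a ∈ {0,...,x} of G(x−a, (a+y)/β), and let f(x,y) be the largest maximiser. Let x₀ ∈ ℕ and y₀ ≥ 1. If f(x₀, y₀) = a₀ and f(x₀+1, y₀−1) > 0, then f(x₀+1, y₀−1) = a₀ + 1. -/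
/-! Shifting one unit from `y` to `x` only relabels the candidate actions `a ↦ a + 1`, so the
objective at `(x₀ + 1, y₀ - 1)` restricted to `a ≥ 1` is the objective at `(x₀, y₀)`. A positive
largest maximiser at the shifted state is therefore a shifted maximiser at the original state, and
comparing the two maximal values in both directions pins it down to `a₀ + 1`. -/

open Finset

def IsLargestMaximizer {α : Type*} [PartialOrder α] (φ : ℕ → α) (n a : ℕ) : Prop :=
  a ≤ n ∧ (∀ b ≤ n, φ b ≤ φ a) ∧ ∀ b ≤ n, φ b = φ a → b ≤ a

theorem IsLargestMaximizer.eq_succ_of_shift {α : Type*} [PartialOrder α] {φ ψ : ℕ → α}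
    {n a b : ℕ} (hshift : ∀ c, ψ (c + 1) = φ c) (ha : IsLargestMaximizer φ n a)
    (hb : IsLargestMaximizer ψ (n + 1) b) (hb0 : 0 < b) : b = a + 1 := by
  obtain ⟨ha_le, ha_max, ha_largest⟩ := ha
  obtain ⟨hb_le, hb_max, hb_largest⟩ := hb
  have hψb : ψ b = φ (b - 1) := by rw [← hshift, Nat.sub_add_cancel hb0]
  have hφ_le : φ (b - 1) ≤ φ a := ha_max _ (by omega)
  have hψ_le : ψ (a + 1) ≤ ψ b := hb_max _ (by omega)
  rw [hshift, hψb] at hψ_le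
  have hval : φ (b - 1) = φ a := le_antisymm hφ_le hψ_le
  have h₁ : b - 1 ≤ a := ha_largest _ (by omega) hval
  have h₂ : a + 1 ≤ b := hb_largest _ (by omega) (by rw [hshift, hψb, hval])
  omega

theorem isLargestMaximizer_of_mul_sup' {φ : ℕ → ℝ} {c J : ℝ} {n a : ℕ} (hc : c ≠ 0)
    (hne : (range (n + 1)).Nonempty) (hJ : J = c * (range (n + 1)).sup' hne φ) (ha : a ≤ n)
    (hJa : J = c * φ a) (hlargest : ∀ b ≤ n, c * φ b = J → b ≤ a) :
    IsLargestMaximizer φ n a := by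
  have hsup : (range (n + 1)).sup' hne φ = φ a := mul_left_cancel₀ hc (hJ.symm.trans hJa)
  refine ⟨ha, fun b hb => ?_, fun b hb hφ => hlargest b hb (by rw [hφ, hJa])⟩
  rw [← hsup]
  exact le_sup' φ (mem_range.mpr (by omega))

theorem stmt13_general (γ β : ℝ) (hβ0 : 0 < β)
    (G : ℕ → ℝ → ℝ)
    (J : ℕ → ℝ → ℝ)
    (hJ : ∀ x : ℕ, ∀ y : ℝ, 0 ≤ y → J x y = β ^ γ * (Finset.range (x + 1)).sup'
      (Finset.nonempty_range_iff.mpr (Nat.succ_ne_zero x))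
      (fun a => G (x - a) (((a : ℝ) + y) / β)))
    (f : ℕ → ℝ → ℕ)
    (hf1 : ∀ x : ℕ, ∀ y : ℝ, 0 ≤ y → f x y ≤ x)
    (hf2 : ∀ x : ℕ, ∀ y : ℝ, 0 ≤ y →
      J x y = β ^ γ * G (x - f x y) (((f x y : ℝ) + y) / β))
    (hf3 : ∀ x : ℕ, ∀ y : ℝ, 0 ≤ y → ∀ a : ℕ, a ≤ x →
      β ^ γ * G (x - a) (((a : ℝ) + y) / β) = J x y → a ≤ f x y)
    (x₀ a₀ : ℕ) (y₀ : ℝ) (hy₀ : 1 ≤ y₀)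
    (h0 : f x₀ y₀ = a₀) (h1 : 0 < f (x₀ + 1) (y₀ - 1)) :
    f (x₀ + 1) (y₀ - 1) = a₀ + 1 := by
  have hmax : ∀ x y, 0 ≤ y →
      IsLargestMaximizer (fun a : ℕ => G (x - a) (((a : ℝ) + y) / β)) x (f x y) :=
    fun x y hy => isLargestMaximizer_of_mul_sup' (Real.rpow_pos_of_pos hβ0 γ).ne' _
      (hJ x y hy) (hf1 x y hy) (hf2 x y hy) (hf3 x y hy)
  have hshift : ∀ a : ℕ, G (x₀ + 1 - (a + 1)) ((((a + 1 : ℕ) : ℝ) + (y₀ - 1)) / β)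
      = G (x₀ - a) (((a : ℝ) + y₀) / β) := by
    intro a
    rw [Nat.add_sub_add_right]
    push_cast
    ring_nf
  rw [← h0]
  exact (hmax x₀ y₀ (by linarith)).eq_succ_of_shift hshift (hmax _ _ (by linarith)) h1

theorem stmt13 (γ β : ℝ) (hγ0 : 0 < γ) (hγ1 : γ < 1) (hβ0 : 0 < β) (hβ1 : β < 1)
    (G : ℕ → ℝ → ℝ) (hG : ∀ x : ℕ, ∀ y : ℝ, 0 ≤ y → 0 ≤ G x y)
    (J : ℕ → ℝ → ℝ)
    (hJ : ∀ x : ℕ, ∀ y : ℝ, 0 ≤ y → J x y = β ^ γ * (Finset.range (x + 1)).sup'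
      (Finset.nonempty_range_iff.mpr (Nat.succ_ne_zero x))
      (fun a => G (x - a) (((a : ℝ) + y) / β)))
    (f : ℕ → ℝ → ℕ)
    (hf1 : ∀ x : ℕ, ∀ y : ℝ, 0 ≤ y → f x y ≤ x)
    (hf2 : ∀ x : ℕ, ∀ y : ℝ, 0 ≤ y →
      J x y = β ^ γ * G (x - f x y) (((f x y : ℝ) + y) / β))
    (hf3 : ∀ x : ℕ, ∀ y : ℝ, 0 ≤ y → ∀ a : ℕ, a ≤ x →
      β ^ γ * G (x - a) (((a : ℝ) + y) / β) = J x y → a ≤ f x y)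
    (x₀ a₀ : ℕ) (y₀ : ℝ) (hy₀ : 1 ≤ y₀)
    (h0 : f x₀ y₀ = a₀) (h1 : 0 < f (x₀ + 1) (y₀ - 1)) :
    f (x₀ + 1) (y₀ - 1) = a₀ + 1 :=
  stmt13_general γ β hβ0 G J hJ f hf1 hf2 hf3 x₀ a₀ y₀ hy₀ h0 h1
end
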